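/- Let R, T₀, I₀ > 0 and let u, n > 0, i ∈ ℝ. Then the matrix G = R·[[n/u², 0, −1/u], [0, 2/(n·I₀²), −2i/(n²·I₀²)], [−1/u, −2i/(n²·I₀²), (1/n)·(1 + 2i²/(I₀²·n²))]] is symmetric and positive semidefinite, and its kernel is exactly the one-dimensional span of the vector (u, i, n). (The Hessian metric of the ideal paramagnetic solid is degenerate with null space spanned by the Euler vector field.) -/

import Mathlib

/- Completing the square, the quadratic form of `G` is
`R·(n/u²·(x₀ − (u/n)·x₂)² + 2/(n·I₀²)·(x₁ − (i/n)·x₂)²)`, a sum of two squares of independent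
linear forms with positive weights. Hence `G` is positive semidefinite, and `Gx = 0` forces both
linear forms to vanish at `x`, i.e. `x = (x₂/n)·(u, i, n)`. Conversely `G` kills the Euler vector
`(u, i, n)` because `S` is homogeneous of degree one. -/

open Matrix

/-- The Hessian matrix of `−S` for the ideal paramagnetic solid at a point
`(u, i, n)` with `u, n > 0`, where the entropy is
`S(u,i,n) = n·R·(log(u/(n·R·T₀)) − i²/(n²·I₀²))`:
`G = R·[[n/u², 0, −1/u], [0, 2/(n·I₀²), −2i/(n²·I₀²)],
[−1/u, −2i/(n²·I₀²), (1/n)·(1 + 2i²/(I₀²·n²))]]`. -/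
noncomputable def paramagneticHessianMatrix (R I₀ u i n : ℝ) : Matrix (Fin 3) (Fin 3) ℝ :=
  R • !![n / u ^ 2, 0, -1 / u;
         0, 2 / (n * I₀ ^ 2), -2 * i / (n ^ 2 * I₀ ^ 2);
         -1 / u, -2 * i / (n ^ 2 * I₀ ^ 2), (1 / n) * (1 + 2 * i ^ 2 / (I₀ ^ 2 * n ^ 2))]

theorem paramagneticHessianMatrix_isSymm (R I₀ u i n : ℝ) :
    (paramagneticHessianMatrix R I₀ u i n).IsSymm := by
  ext a b
  fin_cases a <;> fin_cases b <;> simp [paramagneticHessianMatrix]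

section

variable {R I₀ u n : ℝ} (i : ℝ)

theorem dotProduct_paramagneticHessianMatrix_mulVec (hI₀ : I₀ ≠ 0) (hu : u ≠ 0)
    (hn : n ≠ 0) (x : Fin 3 → ℝ) :
    x ⬝ᵥ (paramagneticHessianMatrix R I₀ u i n) *ᵥ x =
      R * (n / u ^ 2 * (x 0 - u / n * x 2) ^ 2 + 2 / (n * I₀ ^ 2) * (x 1 - i / n * x 2) ^ 2) := by
  simp only [paramagneticHessianMatrix, mulVec, dotProduct, Fin.sum_univ_three, Matrix.smul_apply,
      of_apply, cons_val', cons_val_fin_one, cons_val_zero, cons_val_one, cons_val, smul_eq_mul]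
  field_simp
  ring

theorem paramagneticHessianMatrix_mulVec_euler (hI₀ : I₀ ≠ 0) (hu : u ≠ 0) (hn : n ≠ 0) :
    paramagneticHessianMatrix R I₀ u i n *ᵥ ![u, i, n] = 0 := by
  ext a
  fin_cases a <;>
    · simp only [paramagneticHessianMatrix, mulVec, dotProduct, Fin.sum_univ_three,
        Matrix.smul_apply, of_apply, cons_val', cons_val_fin_one, cons_val_zero, cons_val_one,
        cons_val, smul_eq_mul, Fin.reduceFinMk, Pi.zero_apply]
      field_simp
      ring

theorem dotProduct_paramagneticHessianMatrix_mulVec_nonneg (hR : 0 < R) (hI₀ : 0 < I₀)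
    (hu : 0 < u) (hn : 0 < n) (x : Fin 3 → ℝ) :
    0 ≤ x ⬝ᵥ (paramagneticHessianMatrix R I₀ u i n) *ᵥ x := by
  rw [dotProduct_paramagneticHessianMatrix_mulVec i hI₀.ne' hu.ne' hn.ne']
  positivity

theorem eq_smul_euler_of_dotProduct_paramagneticHessianMatrix_mulVec_eq_zero (hR : 0 < R)
    (hI₀ : 0 < I₀) (hu : 0 < u) (hn : 0 < n) {x : Fin 3 → ℝ}
    (hx : x ⬝ᵥ (paramagneticHessianMatrix R I₀ u i n) *ᵥ x = 0) :
    x = (x 2 / n) • ![u, i, n] := by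
  rw [dotProduct_paramagneticHessianMatrix_mulVec i hI₀.ne' hu.ne' hn.ne'] at hx
  have hsum : n / u ^ 2 * (x 0 - u / n * x 2) ^ 2 + 2 / (n * I₀ ^ 2) * (x 1 - i / n * x 2) ^ 2
      = 0 := (mul_eq_zero.mp hx).resolve_left hR.ne'
  obtain ⟨h₀, h₁⟩ := (add_eq_zero_iff_of_nonneg (by positivity) (by positivity)).mp hsum
  replace h₀ := pow_eq_zero_iff two_ne_zero |>.mp <|
    (mul_eq_zero.mp h₀).resolve_left (by positivity)
  replace h₁ := pow_eq_zero_iff two_ne_zero |>.mp <|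
    (mul_eq_zero.mp h₁).resolve_left (by positivity)
  ext a
  fin_cases a
  · simp only [Fin.zero_eta, Pi.smul_apply, cons_val_zero, smul_eq_mul]
    linear_combination h₀
  · simp only [Fin.mk_one, Pi.smul_apply, cons_val_one, cons_val_zero, smul_eq_mul]
    linear_combination h₁
  · simp [hn.ne']

end

theorem paramagnetic_hessian_psd_kernel_general
    (R I₀ u i n : ℝ) (hR : 0 < R) (hI₀ : 0 < I₀)
    (hu : 0 < u) (hn : 0 < n) :
    (paramagneticHessianMatrix R I₀ u i n).IsSymm ∧
    (∀ x : Fin 3 → ℝ, 0 ≤ x ⬝ᵥ (paramagneticHessianMatrix R I₀ u i n).mulVec x) ∧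
    (∀ x : Fin 3 → ℝ,
      (paramagneticHessianMatrix R I₀ u i n).mulVec x = 0 ↔
        ∃ t : ℝ, x = t • ![u, i, n]) := by
  refine ⟨paramagneticHessianMatrix_isSymm R I₀ u i n,
    dotProduct_paramagneticHessianMatrix_mulVec_nonneg i hR hI₀ hu hn, fun x => ⟨?_, ?_⟩⟩
  · intro hx
    refine ⟨x 2 / n, eq_smul_euler_of_dotProduct_paramagneticHessianMatrix_mulVec_eq_zero i
      hR hI₀ hu hn ?_⟩
    rw [hx, dotProduct_zero]
  · rintro ⟨t, rfl⟩
    rw [mulVec_smul, paramagneticHessianMatrix_mulVec_euler i hI₀.ne' hu.ne' hn.ne', smul_zero]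

/-- **The Hessian metric of the ideal paramagnetic solid is degenerate with
null space spanned by the Euler vector field.** For `R, T₀, I₀ > 0`, `u, n > 0`
and `i ∈ ℝ`, the matrix `G` is symmetric and positive semidefinite, and its
kernel is exactly the span of the Euler vector `(u, i, n)`. -/
theorem paramagnetic_hessian_psd_kernel
    (R T₀ I₀ u i n : ℝ) (hR : 0 < R) (hT₀ : 0 < T₀) (hI₀ : 0 < I₀)
    (hu : 0 < u) (hn : 0 < n) :
    (paramagneticHessianMatrix R I₀ u i n).IsSymm ∧
    (∀ x : Fin 3 → ℝ, 0 ≤ x ⬝ᵥ (paramagneticHessianMatrix R I₀ u i n).mulVec x) ∧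
    (∀ x : Fin 3 → ℝ,
      (paramagneticHessianMatrix R I₀ u i n).mulVec x = 0 ↔
        ∃ t : ℝ, x = t • ![u, i, n]) :=
  paramagnetic_hessian_psd_kernel_general R I₀ u i n hR hI₀ hu hn
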